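/- Let (Ω, F, P) be a probability space and p ∈ [1, ∞). Let (Y_n)_{n≥1}, Y ∈ L^p(Ω, F, P) with ‖Y_n − Y‖_p → 0, let (f_n)_{n≥1} ⊆ A^0_Lip and f ∈ A^0_Lip with f_n → f uniformly on every compact subset of ℝ. Then ‖f_n(Y_n) − f(Y)‖_p → 0 as n → ∞. -/

import Mathlib

/-!
Split `f_n(Y_n) - f(Y) = (f_n(Y_n) - f_n(Y)) + (f_n(Y) - f(Y))`. The first term is bounded in
`L^p` by `‖Y_n - Y‖_p` because `f_n` is `1`-Lipschitz. The second term tends to `0` pointwise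
and is dominated by `2|Y| ∈ L^p` since `|g(x)| ≤ |x|` for `g ∈ A⁰_Lip`, so it tends to `0` in
`L^p` by dominated convergence.
-/

open MeasureTheory Filter Topology
open scoped ENNReal NNReal

/-- The set `A⁰_Lip` of normalized Lipschitz allocations. -/
def IsA0Lip (f : ℝ → ℝ) : Prop :=
  f 0 = 0 ∧ LipschitzWith 1 f ∧ LipschitzWith 1 (fun x => x - f x)

section Lp

variable {α E F : Type*} [MeasurableSpace α] {μ : Measure α} {p : ℝ≥0∞}
  [NormedAddCommGroup E] [NormedAddCommGroup F]

theorem tendsto_eLpNorm_zero_of_dominated {ι : Type*} {l : Filter ι} [l.IsCountablyGenerated]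
    {G : ι → α → E} {g : α → ℝ} (hp_top : p ≠ ∞)
    (hG : ∀ᶠ n in l, AEStronglyMeasurable (G n) μ) (hg : MemLp g p μ)
    (h_bound : ∀ᶠ n in l, ∀ᵐ x ∂μ, ‖G n x‖ ≤ g x)
    (h_lim : ∀ᵐ x ∂μ, Tendsto (fun n => G n x) l (𝓝 0)) :
    Tendsto (fun n => eLpNorm (G n) p μ) l (𝓝 0) := by
  rcases eq_or_ne p 0 with rfl | hp0
  · simpa using tendsto_const_nhds
  have hp : 0 < p.toReal := ENNReal.toReal_pos hp0 hp_top
  simp_rw [eLpNorm_eq_lintegral_rpow_enorm_toReal hp0 hp_top]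
  have h_int : Tendsto (fun n => ∫⁻ x, ‖G n x‖ₑ ^ p.toReal ∂μ) l (𝓝 (∫⁻ _ : α, 0 ∂μ)) := by
    refine tendsto_lintegral_filter_of_dominated_convergence' (fun x => ‖g x‖ₑ ^ p.toReal)
      (hG.mono fun n hn => hn.enorm.pow_const _) (h_bound.mono fun n hn => ?_)
      (lintegral_rpow_enorm_lt_top_of_eLpNorm_lt_top hp0 hp_top hg.2).ne
      (h_lim.mono fun x hx => ?_)
    · filter_upwards [hn] with x hx
      gcongr
      exact enorm_le_iff_norm_le.2 (hx.trans (Real.le_norm_self _))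
    · simpa [Function.comp_def, ENNReal.zero_rpow_of_pos hp] using
        (((ENNReal.continuous_rpow_const (y := p.toReal)).comp continuous_enorm).tendsto 0).comp hx
  rw [lintegral_zero] at h_int
  simpa [Function.comp_def, ENNReal.zero_rpow_of_pos (inv_pos.2 hp)] using
    ((ENNReal.continuous_rpow_const (y := 1 / p.toReal)).tendsto 0).comp h_int

theorem LipschitzWith.eLpNorm_comp_sub_comp_le {K : ℝ≥0} {f : E → F} (hf : LipschitzWith K f)
    (Y Z : α → E) (p : ℝ≥0∞) :
    eLpNorm (fun x => f (Y x) - f (Z x)) p μ ≤ K * eLpNorm (Y - Z) p μ :=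
  eLpNorm_le_mul_eLpNorm_of_ae_le_mul' (ae_of_all _ fun x => by
    simpa only [edist_eq_enorm_sub, Pi.sub_apply] using hf.edist_le_mul (Y x) (Z x)) p

theorem LipschitzWith.eLpNorm_comp_sub_comp_le_add {K : ℝ≥0} {f g : E → F}
    (hf : LipschitzWith K f) (hg : Continuous g) {Y Z : α → E} (hY : AEStronglyMeasurable Y μ)
    (hZ : AEStronglyMeasurable Z μ) (hp : 1 ≤ p) :
    eLpNorm (fun x => f (Y x) - g (Z x)) p μ ≤
      K * eLpNorm (Y - Z) p μ + eLpNorm (fun x => f (Z x) - g (Z x)) p μ := by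
  have hfZ := hf.continuous.comp_aestronglyMeasurable hZ
  calc eLpNorm (fun x => f (Y x) - g (Z x)) p μ
      = eLpNorm ((fun x => f (Y x) - f (Z x)) + fun x => f (Z x) - g (Z x)) p μ := by
        congr 1; ext; simp
    _ ≤ eLpNorm (fun x => f (Y x) - f (Z x)) p μ + eLpNorm (fun x => f (Z x) - g (Z x)) p μ :=
        eLpNorm_add_le ((hf.continuous.comp_aestronglyMeasurable hY).sub hfZ)
          (hfZ.sub (hg.comp_aestronglyMeasurable hZ)) hp
    _ ≤ _ := by grw [hf.eLpNorm_comp_sub_comp_le]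

end Lp

namespace IsA0Lip

variable {f g : ℝ → ℝ}

theorem lipschitzWith (hf : IsA0Lip f) : LipschitzWith 1 f := hf.2.1

theorem abs_le (hf : IsA0Lip f) (x : ℝ) : |f x| ≤ |x| := by
  simpa [hf.1, Real.dist_eq] using hf.lipschitzWith.dist_le_mul x 0

theorem abs_sub_le (hf : IsA0Lip f) (hg : IsA0Lip g) (x : ℝ) : |f x - g x| ≤ 2 * |x| :=
  calc |f x - g x| ≤ |f x| + |g x| := abs_sub _ _
    _ ≤ |x| + |x| := add_le_add (hf.abs_le x) (hg.abs_le x)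
    _ = 2 * |x| := by ring

theorem tendsto_eLpNorm_comp_sub_comp {Ω ι : Type*} [MeasurableSpace Ω] {μ : Measure Ω}
    {p : ℝ≥0∞} {l : Filter ι} [l.IsCountablyGenerated] (hp_top : p ≠ ∞) {X : Ω → ℝ}
    (hX : MemLp X p μ) {F : ι → ℝ → ℝ} (hF : ∀ n, IsA0Lip (F n)) (hg : IsA0Lip g)
    (hFg : ∀ x, Tendsto (fun n => F n x) l (𝓝 (g x))) :
    Tendsto (fun n => eLpNorm (fun ω => F n (X ω) - g (X ω)) p μ) l (𝓝 0) := by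
  refine tendsto_eLpNorm_zero_of_dominated hp_top (.of_forall fun n => ?_)
    (hX.norm.const_mul 2) (.of_forall fun n => .of_forall fun ω => ?_) (.of_forall fun ω => ?_)
  · exact ((hF n).lipschitzWith.continuous.comp_aestronglyMeasurable hX.1).sub
      (hg.lipschitzWith.continuous.comp_aestronglyMeasurable hX.1)
  · exact (hF n).abs_sub_le hg (X ω)
  · simpa using (hFg (X ω)).sub_const (g (X ω))

end IsA0Lip

theorem comp_tendsto_Lp_general
    {Ω : Type*} [MeasurableSpace Ω] (μ : MeasureTheory.Measure Ω)
    (p : ℝ≥0∞) (hp : 1 ≤ p) (hp_top : p ≠ ∞)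
    (Y : ℕ → Ω → ℝ) (Ylim : Ω → ℝ)
    (hYn : ∀ n, MemLp (Y n) p μ) (hY : MemLp Ylim p μ)
    (hYconv : Filter.Tendsto (fun n => eLpNorm (Y n - Ylim) p μ) Filter.atTop (nhds 0))
    (f : ℕ → ℝ → ℝ) (flim : ℝ → ℝ)
    (hfn : ∀ n, IsA0Lip (f n)) (hf : IsA0Lip flim)
    (hfconv : ∀ K : Set ℝ, IsCompact K →
      TendstoUniformlyOn (fun n => f n) flim Filter.atTop K) :
    Filter.Tendsto
      (fun n => eLpNorm (fun ω => f n (Y n ω) - flim (Ylim ω)) p μ)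
      Filter.atTop (nhds 0) := by
  have hf_pt (x : ℝ) : Tendsto (fun n => f n x) atTop (𝓝 (flim x)) :=
    (hfconv {x} isCompact_singleton).tendsto_at rfl
  have h_le (n : ℕ) := (hfn n).lipschitzWith.eLpNorm_comp_sub_comp_le_add
    hf.lipschitzWith.continuous (hYn n).1 hY.1 hp
  have h_sum := hYconv.add (IsA0Lip.tendsto_eLpNorm_comp_sub_comp hp_top hY hfn hf hf_pt)
  rw [add_zero] at h_sum
  exact tendsto_of_tendsto_of_tendsto_of_le_of_le tendsto_const_nhds h_sum (fun n => zero_le)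
    fun n => by simpa using h_le n

/-- Joint continuity of the composition `(f, Y) ↦ f(Y)`: if `Y_n → Y` in `L^p`
(`p ∈ [1, ∞)`) and `f_n → f` in `A⁰_Lip` uniformly on compacts, then
`f_n(Y_n) → f(Y)` in `L^p`. -/
theorem comp_tendsto_Lp
    {Ω : Type*} [MeasurableSpace Ω] (μ : MeasureTheory.Measure Ω) [IsProbabilityMeasure μ]
    (p : ℝ≥0∞) (hp : 1 ≤ p) (hp_top : p ≠ ∞)
    (Y : ℕ → Ω → ℝ) (Ylim : Ω → ℝ)
    (hYn : ∀ n, MemLp (Y n) p μ) (hY : MemLp Ylim p μ)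
    (hYconv : Filter.Tendsto (fun n => eLpNorm (Y n - Ylim) p μ) Filter.atTop (nhds 0))
    (f : ℕ → ℝ → ℝ) (flim : ℝ → ℝ)
    (hfn : ∀ n, IsA0Lip (f n)) (hf : IsA0Lip flim)
    (hfconv : ∀ K : Set ℝ, IsCompact K →
      TendstoUniformlyOn (fun n => f n) flim Filter.atTop K) :
    Filter.Tendsto
      (fun n => eLpNorm (fun ω => f n (Y n ω) - flim (Ylim ω)) p μ)
      Filter.atTop (nhds 0) :=
  comp_tendsto_Lp_general μ p hp hp_top Y Ylim hYn hY hYconv f flim hfn hf hfconv
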